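/- arXiv:1201.2447 — 4 statements merged into one kernel-verified Lean document; each statement's English description precedes it below -/
import Mathlib

section
/- Section property of p_a and surjectivity of multiplication by the Weyl-denominator factor (the paper's Proposition: 'The map p_α is a section of the multiplication-by-d_{α,−} map t_α; in particular the latter is surjective'): for every a ∈ G with a ≠ 0 and every m : G → ℂ one has t_a (p_a m) = m. In particular the operator t_a : (G → ℂ) → (G → ℂ) is surjective. -/
/-- The lattice `ℤ^d`, modeling the lattice `Λ^{1/2}` of half-weights. -/
abbrev Glat (d : ℕ) : Type := Fin d → ℤ

/-- Multiplication by `d_{α,-} = α^{-1/2} - α^{1/2}` on unbounded Laurent series,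
modeled as the operator `(t_a f) x = f (x + a) - f (x - a)`. -/
def ta {d : ℕ} (a : Glat d) (f : Glat d → ℂ) : Glat d → ℂ :=
  fun x => f (x + a) - f (x - a)

/-- The standard inner product on `ℤ^d`. -/
def innerZ {d : ℕ} (x y : Glat d) : ℤ := ∑ i, x i * y i

/-- The nonnegative part `m⁺` of an unbounded Laurent series `m` with respect to `a`. -/
def mplus {d : ℕ} (a : Glat d) (m : Glat d → ℂ) (x : Glat d) : ℂ :=
  if 0 ≤ innerZ x a then m x else 0

/-- The negative part `m⁻ = m - m⁺`. -/
def mminus {d : ℕ} (a : Glat d) (m : Glat d → ℂ) (x : Glat d) : ℂ :=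
  m x - mplus a m x

/-- The section `p_a m x = Σ_{k∈ℕ} m⁺ (x - (2k+1)•a) - Σ_{k∈ℕ} m⁻ (x + (2k+1)•a)`. -/
noncomputable def pa {d : ℕ} (a : Glat d) (m : Glat d → ℂ) : Glat d → ℂ :=
  fun x =>
    (∑' k : ℕ, mplus a m (x - (2 * k + 1) • a)) - ∑' k : ℕ, mminus a m (x + (2 * k + 1) • a)

lemma innerZ_sub_left {d : ℕ} (x y a : Glat d) :
    innerZ (x - y) a = innerZ x a - innerZ y a := by
  simp [innerZ, sub_mul, Finset.sum_sub_distrib]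

lemma innerZ_add_left {d : ℕ} (x y a : Glat d) :
    innerZ (x + y) a = innerZ x a + innerZ y a := by
  simp [innerZ, add_mul, Finset.sum_add_distrib]

lemma innerZ_nsmul_left {d : ℕ} (n : ℕ) (x a : Glat d) :
    innerZ (n • x) a = (n : ℤ) * innerZ x a := by
  simp [innerZ, Finset.mul_sum, mul_assoc]

lemma innerZ_self_pos {d : ℕ} {a : Glat d} (ha : a ≠ 0) : 0 < innerZ a a := by
  have h : ∃ i, a i ≠ 0 := by
    by_contra h
    push_neg at h
    exact ha (funext h)
  obtain ⟨i, hi⟩ := h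
  exact Finset.sum_pos' (fun j _ => mul_self_nonneg _)
    ⟨i, Finset.mem_univ i, mul_self_pos.mpr hi⟩

lemma tsum_eq_sum_range {f : ℕ → ℂ} {N : ℕ} (h : ∀ n, N ≤ n → f n = 0) :
    ∑' n, f n = ∑ n ∈ Finset.range N, f n := by
  refine tsum_eq_sum ?_
  intro b hb
  exact h b (by simpa using hb)

/-- The map `p_a` is a section of the multiplication-by-`d_{α,-}` map `t_a`;
in particular the latter is surjective. -/
theorem section_property_and_surjectivity {d : ℕ} (hd : 1 ≤ d) (a : Glat d) (ha : a ≠ 0) :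
    (∀ m : Glat d → ℂ, ta a (pa a m) = m) ∧ Function.Surjective (ta a) := by
  have hs : 0 < innerZ a a := innerZ_self_pos ha
  have key : ∀ m : Glat d → ℂ, ta a (pa a m) = m := by
    intro m
    funext x
    have e1 : ∀ k : ℕ, (x + a) - (2 * k + 1) • a = x - (2 * k) • a := by
      intro k; rw [add_nsmul, one_nsmul]; abel
    have e2 : ∀ k : ℕ, (x + a) + (2 * k + 1) • a = x + (2 * k + 2) • a := by
      intro k
      have : (2 * k + 2) • a = (2 * k + 1) • a + a := by
        rw [show 2 * k + 2 = (2 * k + 1) + 1 from rfl, add_nsmul, one_nsmul]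
      rw [this]; abel
    have e3 : ∀ k : ℕ, (x - a) - (2 * k + 1) • a = x - (2 * k + 2) • a := by
      intro k
      have : (2 * k + 2) • a = (2 * k + 1) • a + a := by
        rw [show 2 * k + 2 = (2 * k + 1) + 1 from rfl, add_nsmul, one_nsmul]
      rw [this]; abel
    have e4 : ∀ k : ℕ, (x - a) + (2 * k + 1) • a = x + (2 * k) • a := by
      intro k; rw [add_nsmul, one_nsmul]; abel
    set N : ℕ := (innerZ x a).natAbs + 1 with hN
    -- vanishing bounds
    have hNle : (innerZ x a).natAbs < N := Nat.lt_succ_self _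
    have hplus : ∀ n : ℕ, N ≤ n → mplus a m (x - n • a) = 0 := by
      intro n hn
      have hlt : innerZ (x - n • a) a < 0 := by
        rw [innerZ_sub_left, innerZ_nsmul_left]
        have h1 : innerZ x a ≤ (innerZ x a).natAbs := Int.le_natAbs
        have h2 : (N : ℤ) ≤ (n : ℤ) := by exact_mod_cast hn
        have h3 : (n : ℤ) ≤ (n : ℤ) * innerZ a a := le_mul_of_one_le_right (by positivity) hs
        have : ((innerZ x a).natAbs : ℤ) < N := by exact_mod_cast hNle
        linarith
      rw [mplus, if_neg (not_le.mpr hlt)]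
    have hminus : ∀ n : ℕ, N ≤ n → mminus a m (x + n • a) = 0 := by
      intro n hn
      have hge : 0 ≤ innerZ (x + n • a) a := by
        rw [innerZ_add_left, innerZ_nsmul_left]
        have h1 : -(innerZ x a) ≤ (innerZ x a).natAbs := by
          rw [← Int.natAbs_neg]; exact Int.le_natAbs
        have h2 : (N : ℤ) ≤ (n : ℤ) := by exact_mod_cast hn
        have h3 : (n : ℤ) ≤ (n : ℤ) * innerZ a a := le_mul_of_one_le_right (by positivity) hs
        have : ((innerZ x a).natAbs : ℤ) < N := by exact_mod_cast hNle
        linarith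
      rw [mminus, mplus, if_pos hge, sub_self]
    -- the four tsums
    have t1 : ∑' k : ℕ, mplus a m ((x + a) - (2 * k + 1) • a)
        = ∑ k ∈ Finset.range N, mplus a m (x - (2 * k) • a) := by
      rw [tsum_congr (fun k => by rw [e1 k])]
      exact tsum_eq_sum_range (fun n hn => hplus (2 * n) (le_trans hn (by omega)))
    have t2 : ∑' k : ℕ, mminus a m ((x + a) + (2 * k + 1) • a)
        = ∑ k ∈ Finset.range N, mminus a m (x + (2 * k + 2) • a) := by
      rw [tsum_congr (fun k => by rw [e2 k])]
      exact tsum_eq_sum_range (fun n hn => hminus (2 * n + 2) (le_trans hn (by omega)))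
    have t3 : ∑' k : ℕ, mplus a m ((x - a) - (2 * k + 1) • a)
        = ∑ k ∈ Finset.range N, mplus a m (x - (2 * k + 2) • a) := by
      rw [tsum_congr (fun k => by rw [e3 k])]
      exact tsum_eq_sum_range (fun n hn => hplus (2 * n + 2) (le_trans hn (by omega)))
    have t4 : ∑' k : ℕ, mminus a m ((x - a) + (2 * k + 1) • a)
        = ∑ k ∈ Finset.range N, mminus a m (x + (2 * k) • a) := by
      rw [tsum_congr (fun k => by rw [e4 k])]
      exact tsum_eq_sum_range (fun n hn => hminus (2 * n) (le_trans hn (by omega)))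
    show pa a m (x + a) - pa a m (x - a) = m x
    simp only [pa]
    rw [t1, t2, t3, t4]
    -- telescoping
    have tel1 : ∑ k ∈ Finset.range N, mplus a m (x - (2 * k) • a)
        - ∑ k ∈ Finset.range N, mplus a m (x - (2 * k + 2) • a)
        = mplus a m x := by
      have := Finset.sum_range_sub' (fun k => mplus a m (x - (2 * k) • a)) N
      rw [← Finset.sum_sub_distrib] at *
      rw [show (∑ k ∈ Finset.range N, (mplus a m (x - (2 * k) • a)
          - mplus a m (x - (2 * k + 2) • a)))
        = ∑ k ∈ Finset.range N, ((fun k => mplus a m (x - (2 * k) • a)) k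
          - (fun k => mplus a m (x - (2 * k) • a)) (k + 1)) from by
          refine Finset.sum_congr rfl fun k _ => ?_
          simp only []
          congr 2 <;> omega]
      rw [this, hplus (2 * N) (by omega)]
      simp
    have tel2 : ∑ k ∈ Finset.range N, mminus a m (x + (2 * k) • a)
        - ∑ k ∈ Finset.range N, mminus a m (x + (2 * k + 2) • a)
        = mminus a m x := by
      have := Finset.sum_range_sub' (fun k => mminus a m (x + (2 * k) • a)) N
      rw [← Finset.sum_sub_distrib] at *
      rw [show (∑ k ∈ Finset.range N, (mminus a m (x + (2 * k) • a)
          - mminus a m (x + (2 * k + 2) • a)))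
        = ∑ k ∈ Finset.range N, ((fun k => mminus a m (x + (2 * k) • a)) k
          - (fun k => mminus a m (x + (2 * k) • a)) (k + 1)) from by
          refine Finset.sum_congr rfl fun k _ => ?_
          simp only []
          congr 2 <;> omega]
      rw [this, hminus (2 * N) (by omega)]
      simp
    have : mplus a m x + mminus a m x = m x := by simp [mminus]
    linear_combination tel1 + tel2 + this
  exact ⟨key, fun m => ⟨pa a m, key m⟩⟩
end

section
/- Kernel of powers of multiplication by the Weyl-denominator factor (the paper's Proposition 'for any α and any n ≥ 0 the kernel of t_α^n is ℂ[[Λ^{1/2}]]_{(α)} · y_α^{(n)}'): let a ∈ G with a ≠ 0 and let n ∈ ℕ. For every f : G → ℂ one has t_a^n f = 0 if and only if there exists an a-finite g : G → ℂ with f = g ⋆_a c_n. -/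
/-- The coefficient sequence `c_n` of the series `y_α^{(n)}` in powers of `α^{1/2}`:
for `n ≥ 1`, `c_n (2k+n) = choose (n-1+k) (n-1)` and
`c_n (-(2k+n)) = (-1)^{n+1} * choose (n-1+k) (n-1)` for `k ∈ ℕ`, `0` elsewhere; `c_0 = 0`. -/
def cseq (n : ℕ) (m : ℤ) : ℤ :=
  if n = 0 then 0
  else if (n : ℤ) ≤ m ∧ (m - (n : ℤ)) % 2 = 0 then
    ((n - 1 + ((m - (n : ℤ)) / 2).toNat).choose (n - 1) : ℤ)
  else if m ≤ -(n : ℤ) ∧ (m + (n : ℤ)) % 2 = 0 then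
    (-1) ^ (n + 1) * ((n - 1 + ((-m - (n : ℤ)) / 2).toNat).choose (n - 1) : ℤ)
  else 0

/-- `g : ℤ^d → ℂ` is `a`-finite if along every coset of `ℤ•a` it has finite support. -/
def AFinite {d : ℕ} (a : Glat d) (g : Glat d → ℂ) : Prop :=
  ∀ x : Glat d, {m : ℤ | g (x + m • a) ≠ 0}.Finite

/-- Convolution `(g ⋆_a c) x = Σ_{m ∈ ℤ} g (x - m•a) * c m`; for `a`-finite `g`
only finitely many terms are nonzero. -/
noncomputable def conv {d : ℕ} (a : Glat d) (g : Glat d → ℂ) (c : ℤ → ℤ) : Glat d → ℂ :=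
  fun x => ∑' m : ℤ, g (x - m • a) * (c m : ℂ)

open Function

def shiftDiff (c : ℤ → ℤ) : ℤ → ℤ := fun m => c (m + 1) - c (m - 1)

-- The coefficients of `s_α^n` in powers of `α^{1/2}`, but only for `n ≥ 1`:
-- at `n = 0` this is not `δ₀`.
def sPowCoeff (n : ℕ) (m : ℤ) : ℤ :=
  if (n : ℤ) ≤ m ∧ (m - n) % 2 = 0 then ((n - 1 + ((m - n) / 2).toNat).choose (n - 1) : ℤ)
  else 0

lemma sPowCoeff_of_eq {n k : ℕ} {m : ℤ} (h : m = n + 2 * k) :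
    sPowCoeff n m = (n - 1 + k).choose (n - 1) := by
  rw [sPowCoeff, if_pos (by omega)]
  congr 3
  omega

lemma sPowCoeff_eq_zero {n : ℕ} {m : ℤ} (h : ∀ k : ℕ, m ≠ n + 2 * k) : sPowCoeff n m = 0 := by
  rw [sPowCoeff, if_neg]
  rintro ⟨hle, hpar⟩
  exact h ((m - n) / 2).toNat (by omega)

lemma sPowCoeff_succ_add_one_sub {n : ℕ} (hn : n ≠ 0) (m : ℤ) :
    sPowCoeff (n + 1) (m + 1) - sPowCoeff (n + 1) (m - 1) = sPowCoeff n m := by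
  by_cases hm : ∃ k : ℕ, m = n + 2 * k
  · obtain ⟨k, rfl⟩ := hm
    obtain ⟨p, rfl⟩ := Nat.exists_eq_add_one_of_ne_zero hn
    rcases k with _ | k
    · rw [sPowCoeff_of_eq (k := 0) (by push_cast; ring), sPowCoeff_eq_zero (by omega),
        sPowCoeff_of_eq (k := 0) (by ring)]
      simp
    · rw [sPowCoeff_of_eq (k := k + 1) (by push_cast; ring),
        sPowCoeff_of_eq (k := k) (by push_cast; ring), sPowCoeff_of_eq (k := k + 1) rfl,
        Nat.add_sub_cancel, Nat.add_sub_cancel, sub_eq_iff_eq_add,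
        show p + 1 + (k + 1) = p + k + 1 + 1 by ring, Nat.choose_succ_succ',
        show p + (k + 1) = p + k + 1 by ring, show p + 1 + k = p + k + 1 by ring]
      push_cast
      ring
  · simp only [not_exists] at hm
    rw [sPowCoeff_eq_zero hm, sPowCoeff_eq_zero, sPowCoeff_eq_zero, sub_zero]
    · intro k; have := hm (k + 1); push_cast at this ⊢; omega
    · intro k; have := hm k; push_cast at this ⊢; omega

lemma cseq_zero : cseq 0 = 0 := by
  ext m
  simp [cseq]

lemma cseq_one (m : ℤ) : cseq 1 m = if Odd m then 1 else 0 := by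
  simp only [cseq, Int.odd_iff]
  split_ifs <;> simp_all <;> omega

lemma cseq_eq_sPowCoeff {n : ℕ} (hn : n ≠ 0) (m : ℤ) :
    cseq n m = sPowCoeff n m + (-1) ^ (n + 1) * sPowCoeff n (-m) := by
  simp only [cseq, sPowCoeff]
  split_ifs <;> omega

lemma shiftDiff_cseq_succ (n : ℕ) : shiftDiff (cseq (n + 1)) = cseq n := by
  ext m
  rcases eq_or_ne n 0 with rfl | hn
  · simp [shiftDiff, cseq_one, cseq_zero, parity_simps]
  have h_pos := sPowCoeff_succ_add_one_sub hn m
  have h_neg := sPowCoeff_succ_add_one_sub hn (-m)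
  rw [show -m + 1 = -(m - 1) by ring, show -m - 1 = -(m + 1) by ring] at h_neg
  simp only [shiftDiff, cseq_eq_sPowCoeff hn, cseq_eq_sPowCoeff n.add_one_ne_zero]
  linear_combination h_pos + (-1) ^ (n + 1) * h_neg

lemma iterate_shiftDiff_cseq (k j : ℕ) : shiftDiff^[k] (cseq (k + j)) = cseq j := by
  induction k with
  | zero => simp
  | succ k ih => rw [iterate_succ_apply, add_right_comm, shiftDiff_cseq_succ, ih]

section Lattice

variable {d : ℕ} {a : Glat d}

lemma ta_sub (f h : Glat d → ℂ) : ta a (f - h) = ta a f - ta a h := by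
  ext x
  simp only [ta, Pi.sub_apply]
  ring

lemma AFinite.add {g h : Glat d → ℂ} (hg : AFinite a g) (hh : AFinite a h) :
    AFinite a (g + h) := fun x =>
  ((hg x).union (hh x)).subset fun m hm => by
    by_contra hc
    simp_all

lemma AFinite.ta {g : Glat d → ℂ} (hg : AFinite a g) : AFinite a (ta a g) := by
  intro x
  refine ((hg (x + a)).union (hg (x - a))).subset fun m hm => ?_
  rw [Set.mem_ofPred_eq, _root_.ta, add_right_comm, add_sub_right_comm] at hm
  by_contra hc
  simp_all

lemma AFinite.iterate_ta {g : Glat d → ℂ} (hg : AFinite a g) (k : ℕ) :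
    AFinite a ((_root_.ta a)^[k] g) :=
  Iterate.rec _ hg (fun _ => AFinite.ta) k

lemma AFinite.summable {g : Glat d → ℂ} (hg : AFinite a g) (x : Glat d) (c : ℤ → ℂ) :
    Summable fun m : ℤ => g (x - m • a) * c m := by
  have hfin : {m : ℤ | g (x - m • a) ≠ 0}.Finite := by
    simpa [sub_eq_add_neg, ← neg_smul] using (hg x).neg
  exact summable_of_hasFiniteSupport <| show Set.Finite _ from
    hfin.subset fun m hm => left_ne_zero_of_mul hm

lemma conv_add {g h : Glat d → ℂ} (hg : AFinite a g) (hh : AFinite a h) (c : ℤ → ℤ) :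
    conv a (g + h) c = conv a g c + conv a h c := by
  ext x
  simp only [conv, Pi.add_apply, add_mul]
  exact (hg.summable x _).tsum_add (hh.summable x _)

lemma conv_ta {g : Glat d → ℂ} (hg : AFinite a g) (c : ℤ → ℤ) :
    conv a (ta a g) c = ta a (conv a g c) := by
  ext x
  simp only [conv, _root_.ta, sub_mul]
  rw [← (hg.summable (x + a) _).tsum_sub (hg.summable (x - a) _)]
  simp only [sub_add_eq_add_sub, sub_right_comm x a]

lemma conv_apply_add (g : Glat d → ℂ) (c : ℤ → ℤ) (x : Glat d) :
    conv a g c (x + a) = ∑' m : ℤ, g (x - m • a) * c (m + 1) := by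
  rw [conv, ← (Equiv.addRight 1).tsum_eq]
  simp [add_smul]

lemma conv_apply_sub (g : Glat d → ℂ) (c : ℤ → ℤ) (x : Glat d) :
    conv a g c (x - a) = ∑' m : ℤ, g (x - m • a) * c (m - 1) := by
  rw [conv, ← (Equiv.subRight 1).tsum_eq]
  simp [sub_smul]

lemma ta_conv {g : Glat d → ℂ} (hg : AFinite a g) (c : ℤ → ℤ) :
    ta a (conv a g c) = conv a g (shiftDiff c) := by
  ext x
  rw [ta, conv_apply_add, conv_apply_sub, ← (hg.summable x _).tsum_sub (hg.summable x _)]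
  simp only [conv, shiftDiff, Int.cast_sub, mul_sub]

lemma iterate_ta_conv {g : Glat d → ℂ} (hg : AFinite a g) (k : ℕ) (c : ℤ → ℤ) :
    (ta a)^[k] (conv a g c) = conv a g (shiftDiff^[k] c) :=
  (Semiconj.iterate_right (fun c => (ta_conv hg c).symm) k c).symm

lemma conv_iterate_ta {g : Glat d → ℂ} (hg : AFinite a g) (k : ℕ) (c : ℤ → ℤ) :
    conv a ((ta a)^[k] g) c = (ta a)^[k] (conv a g c) := by
  induction k with
  | zero => rfl
  | succ k ih => rw [iterate_succ_apply', conv_ta (hg.iterate_ta k), ih, iterate_succ_apply']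

end Lattice

section Kernel

variable {d : ℕ} {a : Glat d}

lemma periodic_of_ta_eq_zero {f : Glat d → ℂ} (hf : ta a f = 0) : Periodic f (a + a) := by
  intro x
  have h := congrFun hf (x + a)
  rwa [ta, add_sub_cancel_right, Pi.zero_apply, sub_eq_zero, add_assoc] at h

lemma existsUnique_sub_odd_mul_mem_Ico {p : ℤ} (hp : 0 < p) (s : ℤ) :
    ∃! k : ℤ, s - (2 * k + 1) * p ∈ Set.Ico 0 (2 * p) := by
  have h_eq (j : ℤ) : s - (2 * j + 1) * p = s - p - j • (2 * p) := by rw [smul_eq_mul]; ring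
  simp only [h_eq]
  simpa only [zero_add] using existsUnique_sub_zsmul_mem_Ico (by positivity : 0 < 2 * p) (s - p) 0

lemma exists_aFinite_conv_cseq_one_of_ta_eq_zero (ha : a ≠ 0) {f : Glat d → ℂ}
    (hf : ta a f = 0) : ∃ g : Glat d → ℂ, AFinite a g ∧ f = conv a g (cseq 1) := by
  obtain ⟨i, hi⟩ := Function.ne_iff.1 ha
  set p := a i * a i
  have hp : 0 < p := mul_self_pos.2 hi
  have h_add (y : Glat d) (m : ℤ) : a i * (y + m • a) i = a i * y i + m * p := by
    simp only [Pi.add_apply, Pi.smul_apply, smul_eq_mul, p]; ring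
  have h_sub (y : Glat d) (m : ℤ) : a i * (y - m • a) i = a i * y i - m * p := by
    simp only [Pi.sub_apply, Pi.smul_apply, smul_eq_mul, p]; ring
  -- `y ↦ a i * y i` grows by `p > 0` per step along `a`, so this window is a fundamental domain
  -- for `ℤ • (a + a)`.
  let g : Glat d → ℂ := fun y => if a i * y i ∈ Set.Ico 0 (2 * p) then f (y + a) else 0
  refine ⟨g, fun x => ?_, funext fun x => ?_⟩
  · have hinj : Injective fun m : ℤ => a i * x i + m * p := fun m n h => by
      simpa [hp.ne'] using h
    refine ((Set.finite_Ico 0 (2 * p)).preimage hinj.injOn).subset fun m hm => ?_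
    by_contra h
    exact hm (if_neg (by rwa [h_add]))
  obtain ⟨k, hk, huniq⟩ := existsUnique_sub_odd_mul_mem_Ico hp (a i * x i)
  rw [conv, tsum_eq_single (2 * k + 1)]
  · have hx : x - (2 * k + 1) • a + a = x + (-k) • (a + a) := by module
    simp only [g, h_sub, if_pos hk, cseq_one, odd_two_mul_add_one, hx,
      (periodic_of_ta_eq_zero hf).zsmul (-k) x]
    simp
  · intro m hm
    rw [cseq_one]
    split_ifs with hodd
    · obtain ⟨j, rfl⟩ := hodd
      have hjk : j ≠ k := by rintro rfl; exact hm rfl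
      simp only [g, h_sub, if_neg (mt (huniq j) hjk), zero_mul]
    · simp

end Kernel

theorem kernel_of_ta_pow_general {d : ℕ} (a : Glat d) (ha : a ≠ 0) (n : ℕ)
    (f : Glat d → ℂ) :
    (ta a)^[n] f = 0 ↔ ∃ g : Glat d → ℂ, AFinite a g ∧ f = conv a g (cseq n) := by
  constructor
  · induction n generalizing f with
    | zero =>
      rintro rfl
      exact ⟨0, fun x => by simp, by ext x; simp [conv, cseq_zero]⟩
    | succ n ih =>
      intro h
      obtain ⟨g, hg, hfg⟩ := ih (ta a f) h
      have hker : ta a (f - conv a g (cseq (n + 1))) = 0 := by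
        rw [ta_sub, ta_conv hg, shiftDiff_cseq_succ, hfg, sub_self]
      obtain ⟨g', hg', hfg'⟩ := exists_aFinite_conv_cseq_one_of_ta_eq_zero ha hker
      refine ⟨g + (ta a)^[n] g', hg.add (hg'.iterate_ta n), ?_⟩
      rw [conv_add hg (hg'.iterate_ta n), conv_iterate_ta hg', iterate_ta_conv hg',
        iterate_shiftDiff_cseq, ← hfg', add_sub_cancel]
  · rintro ⟨g, hg, rfl⟩
    have h_vanish : shiftDiff^[n] (cseq n) = 0 := by
      simpa [cseq_zero] using iterate_shiftDiff_cseq n 0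
    rw [iterate_ta_conv hg, h_vanish]
    ext x
    simp [conv]

/-- The kernel of `t_a^n` is `ℂ[[Λ^{1/2}]]_{(α)} · y_α^{(n)}`: `t_a^n f = 0` iff
`f = g ⋆_a c_n` for some `a`-finite `g`. -/
theorem kernel_of_ta_pow {d : ℕ} (hd : 1 ≤ d) (a : Glat d) (ha : a ≠ 0) (n : ℕ)
    (f : Glat d → ℂ) :
    (ta a)^[n] f = 0 ↔ ∃ g : Glat d → ℂ, AFinite a g ∧ f = conv a g (cseq n) :=
  kernel_of_ta_pow_general a ha n f
end

section
/- Closed formula for powers of the series s_α (first half of the paper's Proposition 'yexplicit': s_α^n = Σ_{k≥0} binom(n−1+k, n−1) · α^{n/2+k}): for every n ≥ 1 the identity s^n = y_n holds in the ring HahnSeries ℤ ℤ, where s is the Hahn series whose coefficient at m ∈ ℤ is 1 if m is odd and m ≥ 1 and is 0 otherwise, and y_n is the Hahn series whose coefficient at m ∈ ℤ is Nat.choose (n − 1 + k) (n − 1) if m = 2k + n for some k ∈ ℕ and is 0 otherwise. -/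
open Classical

/-- The Hahn series `s` modeling `s_α = Σ_{k≥0} α^{k+1/2}` in powers of the half-weight
`α^{1/2}`: its coefficient at `m` is `1` if `m` is odd and `m ≥ 1`, and `0` otherwise. -/
noncomputable def sSeries : HahnSeries ℤ ℤ where
  coeff m := if Odd m ∧ 1 ≤ m then 1 else 0
  isPWO_support' := by
    apply Set.IsWF.isPWO
    apply BddBelow.wellFoundedOn_lt
    refine ⟨1, fun m hm => ?_⟩
    by_contra h
    exact hm (if_neg fun hc => h hc.2)

/-- The Hahn series `y_n` whose coefficient at `m` is `choose (n-1+k) (n-1)` if `m = 2k+n`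
for some `k ∈ ℕ`, and `0` otherwise. -/
noncomputable def ySeries (n : ℕ) : HahnSeries ℤ ℤ where
  coeff m := if h : ∃ k : ℕ, m = 2 * (k : ℤ) + (n : ℤ) then
      ((n - 1 + h.choose).choose (n - 1) : ℤ) else 0
  isPWO_support' := by
    apply Set.IsWF.isPWO
    apply BddBelow.wellFoundedOn_lt
    refine ⟨(n : ℤ), fun m hm => ?_⟩
    by_contra h
    refine hm (dif_neg ?_)
    rintro ⟨k, hk⟩
    omega

lemma ySeries_coeff (n k : ℕ) :
    (ySeries n).coeff (2 * (k : ℤ) + n) = ((n - 1 + k).choose (n - 1) : ℤ) := by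
  have h : ∃ k' : ℕ, 2 * (k : ℤ) + n = 2 * (k' : ℤ) + n := ⟨k, rfl⟩
  have hc : h.choose = k := by have := h.choose_spec; omega
  show dite _ _ _ = _
  rw [dif_pos h, hc]

lemma ySeries_coeff_zero (n : ℕ) (m : ℤ) (hm : ¬ ∃ k : ℕ, m = 2 * (k : ℤ) + n) :
    (ySeries n).coeff m = 0 := dif_neg hm

lemma sSeries_coeff (m : ℤ) : sSeries.coeff m = if Odd m ∧ 1 ≤ m then 1 else 0 := rfl

lemma sSeries_support : sSeries.support = {m | Odd m ∧ 1 ≤ m} := by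
  ext m
  simp only [HahnSeries.mem_support, sSeries_coeff, Set.mem_setOf_eq]
  split <;> simp_all

lemma ySeries_support (n : ℕ) (hn : 1 ≤ n) :
    (ySeries n).support = {m | ∃ k : ℕ, m = 2 * (k : ℤ) + n} := by
  ext m
  simp only [HahnSeries.mem_support, Set.mem_setOf_eq]
  constructor
  · intro h
    by_contra hc
    exact h (ySeries_coeff_zero n m hc)
  · rintro ⟨k, rfl⟩
    rw [ySeries_coeff]
    have : 0 < (n - 1 + k).choose (n - 1) := Nat.choose_pos (by omega)
    positivity

lemma sSeries_mul_ySeries (n : ℕ) (hn : 1 ≤ n) :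
    sSeries * ySeries n = ySeries (n + 1) := by
  ext m
  rw [HahnSeries.coeff_mul]
  by_cases hm : ∃ K : ℕ, m = 2 * (K : ℤ) + ((n : ℤ) + 1)
  · obtain ⟨K, rfl⟩ := hm
    rw [show 2 * (K : ℤ) + ((n : ℤ) + 1) = 2 * (K : ℤ) + (((n + 1 : ℕ)) : ℤ) by push_cast; ring,
      ySeries_coeff (n + 1) K]
    trans (∑ k ∈ Finset.range (K + 1), ((n - 1 + k).choose (n - 1) : ℤ))
    · refine Finset.sum_nbij' (i := fun ij => ((ij.2 - n).toNat / 2))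
        (j := fun k => ((2 * (K : ℤ) + 1 - 2 * k, 2 * (k : ℤ) + n) : ℤ × ℤ))
        ?_ ?_ ?_ ?_ ?_
      · intro ij hij
        rw [Finset.mem_addAntidiagonal, sSeries_support, ySeries_support n hn] at hij
        obtain ⟨⟨ho, h1⟩, ⟨k, hk⟩, hsum⟩ := hij
        simp only [Finset.mem_range]
        omega
      · intro k hk
        simp only [Finset.mem_range] at hk
        beta_reduce
        rw [Finset.mem_addAntidiagonal, sSeries_support, ySeries_support n hn]
        refine ⟨⟨⟨(K : ℤ) - k, by push_cast; omega⟩, by omega⟩, ⟨k, rfl⟩, by push_cast; ring⟩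
      · intro ij hij
        rw [Finset.mem_addAntidiagonal, sSeries_support, ySeries_support n hn] at hij
        obtain ⟨⟨ho, h1⟩, ⟨k, hk⟩, hsum⟩ := hij
        obtain ⟨j, hj⟩ := ho
        push_cast at hsum
        ext <;> simp <;> omega
      · intro k hk
        simp only [Finset.mem_range] at hk
        simp
        omega
      · intro ij hij
        rw [Finset.mem_addAntidiagonal, sSeries_support, ySeries_support n hn] at hij
        obtain ⟨⟨ho, h1⟩, ⟨k, hk⟩, hsum⟩ := hij
        have hk' : (ij.2 - n).toNat / 2 = k := by omega
        beta_reduce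
        rw [hk', sSeries_coeff, if_pos ⟨ho, h1⟩, one_mul, hk, ySeries_coeff]
    · have h2 : ∑ k ∈ Finset.range (K + 1), (n - 1 + k).choose (n - 1)
          = (K + (n - 1) + 1).choose (n - 1 + 1) := by
        rw [← Nat.sum_range_add_choose K (n - 1)]
        exact Finset.sum_congr rfl fun k _ => by rw [Nat.add_comm]
      rw [show (n + 1 - 1 + K).choose (n + 1 - 1) = (K + (n - 1) + 1).choose (n - 1 + 1) by
        congr 1 <;> omega]
      rw [← h2]
      push_cast
      rfl
  · rw [ySeries_coeff_zero (n + 1) m (by push_cast at hm ⊢; exact_mod_cast hm)]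
    apply Finset.sum_eq_zero
    intro ij hij
    rw [Finset.mem_addAntidiagonal, sSeries_support, ySeries_support n hn] at hij
    obtain ⟨⟨ho, h1⟩, ⟨k, hk⟩, hsum⟩ := hij
    exfalso
    obtain ⟨j, hj⟩ := ho
    exact hm ⟨k + j.toNat, by omega⟩

/-- Closed formula for the powers of `s_α`:
`s_α^n = Σ_{k≥0} choose (n-1+k) (n-1) · α^{n/2+k}` for every `n ≥ 1`. -/
theorem sSeries_pow (n : ℕ) (hn : 1 ≤ n) : sSeries ^ n = ySeries n := by
  induction n with
  | zero => omega
  | succ n ih =>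
    rcases Nat.eq_or_lt_of_le hn with h | h
    · -- n + 1 = 1
      have hn0 : n = 0 := by omega
      subst hn0
      rw [pow_one]
      ext m
      rw [sSeries_coeff]
      by_cases hc : Odd m ∧ 1 ≤ m
      · rw [if_pos hc]
        obtain ⟨⟨j, hj⟩, h1⟩ := hc
        have : m = 2 * ((j.toNat : ℕ) : ℤ) + (1 : ℕ) := by push_cast; omega
        rw [this, ySeries_coeff]
        norm_num
      · rw [if_neg hc, ySeries_coeff_zero]
        rintro ⟨k, hk⟩
        exact hc ⟨⟨k, by omega⟩, by omega⟩
    · have hn1 : 1 ≤ n := by omega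
      rw [pow_succ, ih hn1, mul_comm, sSeries_mul_ySeries n hn1]
end

section
/- Three-term recurrence for the kernel generators (the paper's Proposition '(α^{−1} + α) · y_α^{(n)} = 2 · y_α^{(n)} + y_α^{(n−2)}', in coefficient form): for every n ≥ 2 and every m ∈ ℤ, c_n (m + 2) + c_n (m − 2) = 2 * c_n m + c_{n−2} m. -/
lemma cseq_eval_pos (n k : ℕ) (m : ℤ) (hn : 1 ≤ n) (hm : m = (n : ℤ) + 2 * k) :
    cseq n m = ((n - 1 + k).choose (n - 1) : ℤ) := by
  subst hm
  unfold cseq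
  rw [if_neg (by omega), if_pos ⟨by omega, by omega⟩]
  have h : ((n : ℤ) + 2 * k - n) / 2 = (k : ℤ) := by omega
  rw [h, Int.toNat_natCast]

lemma cseq_eval_neg (n k : ℕ) (m : ℤ) (hn : 1 ≤ n) (hm : m = -((n : ℤ) + 2 * k)) :
    cseq n m = (-1) ^ (n + 1) * ((n - 1 + k).choose (n - 1) : ℤ) := by
  subst hm
  unfold cseq
  rw [if_neg (by omega), if_neg (by omega), if_pos ⟨by omega, by omega⟩]
  have h : (-(-((n : ℤ) + 2 * k)) - n) / 2 = (k : ℤ) := by omega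
  rw [h, Int.toNat_natCast]

lemma cseq_eval_zero (n : ℕ) (m : ℤ)
    (h : (-(n : ℤ) < m ∧ m < n) ∨ (m - n) % 2 ≠ 0) : cseq n m = 0 := by
  unfold cseq
  split_ifs with h0 h1 h2
  · rfl
  · exfalso; omega
  · exfalso; omega
  · rfl

lemma key (a r : ℕ) :
    (a + 2).choose (r + 2) + a.choose (r + 2)
      = 2 * (a + 1).choose (r + 2) + a.choose r := by
  simp [Nat.choose_succ_succ]; ring

/-- Three-term recurrence `(α^{-1} + α) · y_α^{(n)} = 2 · y_α^{(n)} + y_α^{(n-2)}`,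
in coefficient form: `c_n (m+2) + c_n (m-2) = 2 · c_n m + c_{n-2} m` for `n ≥ 2`, `m ∈ ℤ`. -/
theorem cseq_three_term_recurrence (n : ℕ) (hn : 2 ≤ n) (m : ℤ) :
    cseq n (m + 2) + cseq n (m - 2) = 2 * cseq n m + cseq (n - 2) m := by
  obtain ⟨p, rfl⟩ : ∃ p, n = p + 2 := ⟨n - 2, by omega⟩
  simp only [Nat.add_sub_cancel]
  by_cases hpar : (m - (p : ℤ)) % 2 = 0
  case neg =>
    rw [cseq_eval_zero (p+2) (m+2) (Or.inr (by push_cast; omega)),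
        cseq_eval_zero (p+2) (m-2) (Or.inr (by push_cast; omega)),
        cseq_eval_zero (p+2) m (Or.inr (by push_cast; omega)),
        cseq_eval_zero p m (Or.inr (by push_cast; omega))]
    ring
  case pos =>
  have hcase : ((p:ℤ)+4 ≤ m) ∨ m = (p:ℤ)+2 ∨ m = (p:ℤ) ∨ (-(p:ℤ)+2 ≤ m ∧ m ≤ (p:ℤ)-2)
      ∨ m = -(p:ℤ) ∨ m = -(p:ℤ)-2 ∨ m ≤ -(p:ℤ)-4 := by omega
  rcases hcase with h|h|h|h|h|h|h
  · -- m ≥ p+4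
    obtain ⟨k, hk⟩ : ∃ k : ℕ, m = ((p+2:ℕ):ℤ) + 2*((k+1:ℕ):ℤ) :=
      ⟨((m - p - 4)/2).toNat, by push_cast; omega⟩
    push_cast at hk
    rw [cseq_eval_pos (p+2) (k+2) (m+2) (by omega) (by push_cast; omega),
        cseq_eval_pos (p+2) k (m-2) (by omega) (by push_cast; omega),
        cseq_eval_pos (p+2) (k+1) m (by omega) (by push_cast; omega)]
    rcases p with _ | q
    · rw [show cseq 0 m = 0 from by simp [cseq]]
      simp [Nat.choose_one_right]; push_cast; ring
    · rw [cseq_eval_pos (q+1) (k+2) m (by omega) (by push_cast; omega)]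
      have h2 : (q+1+2-1+(k+2)).choose (q+1+2-1) + (q+1+2-1+k).choose (q+1+2-1)
          = 2 * (q+1+2-1+(k+1)).choose (q+1+2-1) + (q+1-1+(k+2)).choose (q+1-1) := by
        rw [show q+1+2-1+(k+2) = (q+k+2)+2 from by omega,
            show q+1+2-1+k = q+k+2 from by omega,
            show q+1+2-1+(k+1) = (q+k+2)+1 from by omega,
            show q+1+2-1 = q+2 from by omega,
            show q+1-1+(k+2) = q+k+2 from by omega,
            show q+1-1 = q from by omega]
        exact key (q+k+2) q
      exact_mod_cast h2
  · -- m = p+2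
    rw [cseq_eval_pos (p+2) 1 (m+2) (by omega) (by push_cast; omega),
        cseq_eval_zero (p+2) (m-2) (Or.inl ⟨by push_cast; omega, by push_cast; omega⟩),
        cseq_eval_pos (p+2) 0 m (by omega) (by push_cast; omega)]
    rcases p with _ | q
    · rw [show cseq 0 m = 0 from by simp [cseq]]
      norm_num
    · rw [cseq_eval_pos (q+1) 1 m (by omega) (by push_cast; omega)]
      have h2 : (q+1+2-1+1).choose (q+1+2-1) + 0
          = 2 * ((q+1+2-1+0).choose (q+1+2-1)) + (q+1-1+1).choose (q+1-1) := by
        rw [show q+1+2-1+1 = (q+2)+1 from by omega, show q+1+2-1+0 = q+2 from by omega,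
            show q+1+2-1 = q+2 from by omega, show q+1-1+1 = q+1 from by omega,
            show q+1-1 = q from by omega]
        simp [Nat.choose_succ_self_right]
        omega
      have h3 : ((q+1+2-1+1).choose (q+1+2-1) : ℤ) + 0
          = 2 * ((q+1+2-1+0).choose (q+1+2-1)) + (q+1-1+1).choose (q+1-1) := by
        exact_mod_cast h2
      linarith [h3]
  · -- m = p
    rw [cseq_eval_pos (p+2) 0 (m+2) (by omega) (by push_cast; omega)]
    rcases p with _ | q
    · -- n = 2, m = 0
      rw [cseq_eval_neg 2 0 (m-2) (by omega) (by push_cast; omega),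
          cseq_eval_zero 2 m (Or.inl ⟨by push_cast; omega, by push_cast; omega⟩),
          show cseq 0 m = 0 from by simp [cseq]]
      norm_num
    · rw [cseq_eval_zero (q+1+2) (m-2) (Or.inl ⟨by push_cast; omega, by push_cast; omega⟩),
          cseq_eval_zero (q+1+2) m (Or.inl ⟨by push_cast; omega, by push_cast; omega⟩),
          cseq_eval_pos (q+1) 0 m (by omega) (by push_cast; omega)]
      have h2 : (q+1+2-1+0).choose (q+1+2-1) = 1 := by
        rw [show q+1+2-1+0 = q+2 from by omega, show q+1+2-1 = q+2 from by omega]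
        exact Nat.choose_self _
      have h3 : (q+1-1+0).choose (q+1-1) = 1 := by
        rw [show q+1-1+0 = q from by omega, show q+1-1 = q from by omega]
        exact Nat.choose_self _
      rw [h2, h3]
      norm_num
  · -- middle
    rw [cseq_eval_zero (p+2) (m+2) (Or.inl ⟨by push_cast; omega, by push_cast; omega⟩),
        cseq_eval_zero (p+2) (m-2) (Or.inl ⟨by push_cast; omega, by push_cast; omega⟩),
        cseq_eval_zero (p+2) m (Or.inl ⟨by push_cast; omega, by push_cast; omega⟩),
        cseq_eval_zero p m (Or.inl ⟨by push_cast; omega, by push_cast; omega⟩)]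
    ring
  · -- m = -p
    rcases p with _ | q
    · -- n = 2, m = 0 : same as m = p case
      rw [cseq_eval_pos 2 0 (m+2) (by omega) (by push_cast; omega),
          cseq_eval_neg 2 0 (m-2) (by omega) (by push_cast; omega),
          cseq_eval_zero 2 m (Or.inl ⟨by push_cast; omega, by push_cast; omega⟩),
          show cseq 0 m = 0 from by simp [cseq]]
      norm_num
    · rw [cseq_eval_zero (q+1+2) (m+2) (Or.inl ⟨by push_cast; omega, by push_cast; omega⟩),
          cseq_eval_neg (q+1+2) 0 (m-2) (by omega) (by push_cast; omega),
          cseq_eval_zero (q+1+2) m (Or.inl ⟨by push_cast; omega, by push_cast; omega⟩),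
          cseq_eval_neg (q+1) 0 m (by omega) (by push_cast; omega)]
      have h2 : (q+1+2-1+0).choose (q+1+2-1) = 1 := by
        rw [show q+1+2-1+0 = q+2 from by omega, show q+1+2-1 = q+2 from by omega]
        exact Nat.choose_self _
      have h3 : (q+1-1+0).choose (q+1-1) = 1 := by
        rw [show q+1-1+0 = q from by omega, show q+1-1 = q from by omega]
        exact Nat.choose_self _
      rw [h2, h3]
      have : ((-1:ℤ))^(q+1+2+1) = (-1)^(q+1+1) := by
        rw [show q+1+2+1 = (q+1+1)+2 from by omega, pow_add]
        ring
      rw [this]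
      ring
  · -- m = -p-2
    rw [cseq_eval_zero (p+2) (m+2) (Or.inl ⟨by push_cast; omega, by push_cast; omega⟩),
        cseq_eval_neg (p+2) 1 (m-2) (by omega) (by push_cast; omega),
        cseq_eval_neg (p+2) 0 m (by omega) (by push_cast; omega)]
    rcases p with _ | q
    · rw [show cseq 0 m = 0 from by simp [cseq]]
      norm_num
    · rw [cseq_eval_neg (q+1) 1 m (by omega) (by push_cast; omega)]
      have hs : ((-1:ℤ))^(q+1+2+1) = (-1)^(q+1+1) := by
        rw [show q+1+2+1 = (q+1+1)+2 from by omega, pow_add]; ring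
      rw [hs]
      have h2 : (q+1+2-1+1).choose (q+1+2-1) = q+3 := by
        rw [show q+1+2-1+1 = (q+2)+1 from by omega, show q+1+2-1 = q+2 from by omega,
            Nat.choose_succ_self_right]
      have h3 : (q+1+2-1+0).choose (q+1+2-1) = 1 := by
        rw [show q+1+2-1+0 = q+2 from by omega, show q+1+2-1 = q+2 from by omega]
        exact Nat.choose_self _
      have h4 : (q+1-1+1).choose (q+1-1) = q+1 := by
        rw [show q+1-1+1 = q+1 from by omega, show q+1-1 = q from by omega,
            Nat.choose_succ_self_right]
      rw [h2, h3, h4]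
      push_cast
      ring
  · -- m ≤ -p-4
    obtain ⟨k, hk⟩ : ∃ k : ℕ, m = -(((p+2:ℕ):ℤ) + 2*((k+1:ℕ):ℤ)) :=
      ⟨((-m - p - 4)/2).toNat, by push_cast; omega⟩
    push_cast at hk
    rw [cseq_eval_neg (p+2) k (m+2) (by omega) (by push_cast; omega),
        cseq_eval_neg (p+2) (k+2) (m-2) (by omega) (by push_cast; omega),
        cseq_eval_neg (p+2) (k+1) m (by omega) (by push_cast; omega)]
    rcases p with _ | q
    · rw [show cseq 0 m = 0 from by simp [cseq]]
      simp [Nat.choose_one_right]; push_cast; ring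
    · rw [cseq_eval_neg (q+1) (k+2) m (by omega) (by push_cast; omega)]
      have hs : ((-1:ℤ))^(q+1+2+1) = (-1)^(q+1+1) := by
        rw [show q+1+2+1 = (q+1+1)+2 from by omega, pow_add]; ring
      rw [hs]
      have h2 : (q+1+2-1+(k+2)).choose (q+1+2-1) + (q+1+2-1+k).choose (q+1+2-1)
          = 2 * (q+1+2-1+(k+1)).choose (q+1+2-1) + (q+1-1+(k+2)).choose (q+1-1) := by
        rw [show q+1+2-1+(k+2) = (q+k+2)+2 from by omega,
            show q+1+2-1+k = q+k+2 from by omega,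
            show q+1+2-1+(k+1) = (q+k+2)+1 from by omega,
            show q+1+2-1 = q+2 from by omega,
            show q+1-1+(k+2) = q+k+2 from by omega,
            show q+1-1 = q from by omega]
        exact key (q+k+2) q
      have h3 : ((q+1+2-1+(k+2)).choose (q+1+2-1) : ℤ) + (q+1+2-1+k).choose (q+1+2-1)
          = 2 * (q+1+2-1+(k+1)).choose (q+1+2-1) + (q+1-1+(k+2)).choose (q+1-1) := by
        exact_mod_cast h2
      linear_combination ((-1:ℤ))^(q+1+1) * h3
end
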